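/- Let n ≥ 3, r > 0, and let ℝ⁴ be a fixed four-dimensional linear subspace of ℝ^{n+1}. Let z : D → ℝ^{n+1} be a smooth immersion with image in the sphere S³(r) of radius r in ℝ⁴ (|z| = r and z valued in ℝ⁴), and let N : D → ℝ^{n+1} be a smooth unit field valued in ℝ⁴ with N·z = N·z_u = N·z_v = 0; suppose z is minimal in S³(r) and nowhere totally geodesic: G·(z_uu·N) − 2F·(z_uv·N) + E·(z_vv·N) = 0 where E = z_u·z_u, F = z_u·z_v, G = z_v·z_v, and the second fundamental form coefficients (z_uu·N, z_uv·N, z_vv·N) are nonzero at each point. Let b₁(u,v), …, b_{n−2}(u,v) be a smooth orthonormal frame of the orthogonal complement of span{z_u, z_v, N} in ℝ^{n+1}, and define 𝒳(u,v,w¹,…,w^{n−2}) = z(u,v) + Σ_{α} wᵅbᵅ(u,v). Then at every parameter point where 𝒳 is an immersion: N(u,v) is a unit vector orthogonal to all first-order partial derivatives of 𝒳 (a unit normal field to the hypersurface M^n parameterized by 𝒳), ∂N/∂wᵅ = 0 for all α, the differential of the Gauss map N has rank exactly two, and the shape operator of M^n has trace zero and exactly two nonzero eigenvalues, opposite to each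 other. Hence M^n is a minimal hypersurface of type number two whose distribution spanned by the eigen-directions of the nonzero principal curvatures is involutive. -/

import Mathlib

open Real Set
open scoped RealInnerProductSpace

noncomputable section

/-- Partial derivative in the first (`u`) direction. -/
def pu {α : Type*} [NormedAddCommGroup α] [NormedSpace ℝ α]
    (f : ℝ × ℝ → α) (p : ℝ × ℝ) : α :=
  fderiv ℝ f p (1, 0)

/-- Partial derivative in the second (`v`) direction. -/
def pv {α : Type*} [NormedAddCommGroup α] [NormedSpace ℝ α]
    (f : ℝ × ℝ → α) (p : ℝ × ℝ) : α :=
  fderiv ℝ f p (0, 1)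

section Aux

variable {E : Type*} [NormedAddCommGroup E] [InnerProductSpace ℝ E]

/-- Product rule for two fields with constant inner product on an open set. -/
lemma aux_inner_fderiv {f g : ℝ × ℝ → E} {D : Set (ℝ × ℝ)} (hD : IsOpen D) {p : ℝ × ℝ}
    (hp : p ∈ D) (hf : DifferentiableAt ℝ f p) (hg : DifferentiableAt ℝ g p)
    {c : ℝ} (h : ∀ x ∈ D, ⟪f x, g x⟫ = c) (ξ : ℝ × ℝ) :
    ⟪f p, fderiv ℝ g p ξ⟫ + ⟪fderiv ℝ f p ξ, g p⟫ = 0 := by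
  have h1 : HasFDerivAt (fun x => ⟪f x, g x⟫)
      ((fderivInnerCLM ℝ (f p, g p)).comp ((fderiv ℝ f p).prod (fderiv ℝ g p))) p :=
    hf.hasFDerivAt.inner ℝ hg.hasFDerivAt
  have h2 : (fun x => ⟪f x, g x⟫) =ᶠ[nhds p] fun _ => c :=
    Filter.eventuallyEq_of_mem (hD.mem_nhds hp) h
  have h3 : fderiv ℝ (fun x => ⟪f x, g x⟫) p = 0 := by
    rw [h2.fderiv_eq]; exact fderiv_const_apply c
  have h4 := h1.fderiv
  rw [h3] at h4
  have h5 := congrFun (congrArg (fun (T : (ℝ × ℝ) →L[ℝ] ℝ) => (T : ℝ × ℝ → ℝ)) h4) ξ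
  simp only [ContinuousLinearMap.zero_apply, ContinuousLinearMap.comp_apply,
    ContinuousLinearMap.prod_apply, fderivInnerCLM_apply] at h5
  linarith [h5]

/-- Derivative of a field valued in a closed subspace stays in the subspace. -/
lemma aux_fderiv_mem [CompleteSpace E] {f : ℝ × ℝ → E} {D : Set (ℝ × ℝ)} (hD : IsOpen D)
    {p : ℝ × ℝ} (hp : p ∈ D) (hf : DifferentiableAt ℝ f p) {W : Submodule ℝ E}
    [W.HasOrthogonalProjection] (h : ∀ x ∈ D, f x ∈ W) (ξ : ℝ × ℝ) :
    fderiv ℝ f p ξ ∈ W := by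
  set P : E →L[ℝ] E := W.subtypeL.comp W.orthogonalProjectionOnto with hP
  have h2 : f =ᶠ[nhds p] fun x => P (f x) := by
    filter_upwards [hD.mem_nhds hp] with x hx
    simp [hP, Submodule.starProjection_eq_self_iff.mpr (h x hx)]
  have h3 : fderiv ℝ f p = P.comp (fderiv ℝ f p) := by
    conv_lhs => rw [h2.fderiv_eq]
    exact (P.hasFDerivAt.comp p hf.hasFDerivAt).fderiv
  rw [h3]
  exact (W.orthogonalProjectionOnto (fderiv ℝ f p ξ)).2

/-- Evaluate a continuous linear map on `ℝ × ℝ` via the standard basis. -/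
lemma aux_clm_eval (T : (ℝ × ℝ) →L[ℝ] E) (a c : ℝ) :
    T (a, c) = a • T (1, 0) + c • T (0, 1) := by
  have : ((a, c) : ℝ × ℝ) = a • ((1 : ℝ), (0 : ℝ)) + c • ((0 : ℝ), (1 : ℝ)) := by
    simp [Prod.ext_iff]
  rw [this, map_add, map_smul, map_smul]

/-- Symmetry of mixed second partial derivatives. -/
lemma aux_symm {f : ℝ × ℝ → E} {D : Set (ℝ × ℝ)} (hD : IsOpen D)
    (hf : ContDiffOn ℝ (⊤ : ℕ∞) f D) {p : ℝ × ℝ} (hp : p ∈ D) :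
    pu (pv f) p = pv (pu f) p := by
  have hc : ContDiffAt ℝ (⊤ : ℕ∞) f p := hf.contDiffAt (hD.mem_nhds hp)
  have hsym := hc.isSymmSndFDerivAt (by simp only [minSmoothness_of_isRCLikeNormedField]; exact WithTop.coe_le_coe.mpr le_top)
  have hdf : DifferentiableAt ℝ (fderiv ℝ f) p := by
    have h1 : ContDiffOn ℝ (⊤ : ℕ∞) (fderiv ℝ f) D := hf.fderiv_of_isOpen hD (by simp)
    exact (h1.contDiffAt (hD.mem_nhds hp)).differentiableAt (by simp)
  have key : ∀ v ξ : ℝ × ℝ, fderiv ℝ (fun x => fderiv ℝ f x v) p ξ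
      = fderiv ℝ (fderiv ℝ f) p ξ v := by
    intro v ξ
    have h5 : fderiv ℝ (fun x => (ContinuousLinearMap.apply ℝ E v) (fderiv ℝ f x)) p
        = (ContinuousLinearMap.apply ℝ E v).comp (fderiv ℝ (fderiv ℝ f) p) :=
      ((ContinuousLinearMap.apply ℝ E v).hasFDerivAt.comp p hdf.hasFDerivAt).fderiv
    have := congrFun (congrArg (fun (T : (ℝ × ℝ) →L[ℝ] E) => (T : ℝ × ℝ → E)) h5) ξ
    simpa using this
  show fderiv ℝ (fun x => fderiv ℝ f x (0, 1)) p (1, 0)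
      = fderiv ℝ (fun x => fderiv ℝ f x (1, 0)) p (0, 1)
  rw [key, key, hsym]

end Aux

set_option maxHeartbeats 4000000 in
/-- **Every minimal surface in a three-dimensional sphere generates a minimal hypersurface
of the class `𝒦₀`**: with `ℝ⁴` a fixed four-dimensional subspace `W` of `ℝ^{n+1}`, a minimal
nowhere totally geodesic surface `z` in the sphere `S³(r) ⊆ W` with unit normal `N` in
`S³(r)`, a smooth orthonormal frame `b₁(u,v), …, b_{n-2}(u,v)` of the orthogonal complement
of `span{z_u, z_v, N}` in `ℝ^{n+1}` and `𝒳(u,v,w) = z(u,v) + ∑ wᵅ·bᵅ(u,v)`, at every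
parameter point where `𝒳` is an immersion: `N` is a unit normal field of the resulting
hypersurface not depending on the `w`-variables, the Gauss map `N` has rank exactly two, and
the shape operator has exactly two nonzero eigenvalues, which are opposite to each other. -/
theorem minimal_surface_in_S3_generates_minimal_hypersurface
    (n : ℕ) (hn : 3 ≤ n) (r : ℝ) (hr : 0 < r)
    (W : Submodule ℝ (EuclideanSpace ℝ (Fin (n + 1)))) (hW : Module.finrank ℝ W = 4)
    (D : Set (ℝ × ℝ)) (hD : IsOpen D)
    (z N : ℝ × ℝ → EuclideanSpace ℝ (Fin (n + 1)))
    (hz : ContDiffOn ℝ (⊤ : ℕ∞) z D) (hN : ContDiffOn ℝ (⊤ : ℕ∞) N D)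
    -- `z` is an immersion with image in the sphere of radius `r` of `W`
    (himm : ∀ p ∈ D, LinearIndependent ℝ ![pu z p, pv z p])
    (hzW : ∀ p ∈ D, z p ∈ W)
    (hsph : ∀ p ∈ D, ‖z p‖ = r)
    -- `N` is a unit normal field of `z` in `S³(r)`, valued in `W`
    (hNW : ∀ p ∈ D, N p ∈ W)
    (hNunit : ∀ p ∈ D, ‖N p‖ = 1)
    (hNz : ∀ p ∈ D, ⟪N p, z p⟫ = 0)
    (hNzu : ∀ p ∈ D, ⟪N p, pu z p⟫ = 0)
    (hNzv : ∀ p ∈ D, ⟪N p, pv z p⟫ = 0)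
    -- `z` is minimal in `S³(r)`: `G·e - 2F·f + E·g = 0`
    (hmin : ∀ p ∈ D,
      ⟪pv z p, pv z p⟫ * ⟪pu (pu z) p, N p⟫
        - 2 * ⟪pu z p, pv z p⟫ * ⟪pv (pu z) p, N p⟫
        + ⟪pu z p, pu z p⟫ * ⟪pv (pv z) p, N p⟫ = 0)
    -- and nowhere totally geodesic: the second fundamental form is nonzero at each point
    (hnf : ∀ p ∈ D,
      ¬(⟪pu (pu z) p, N p⟫ = 0 ∧ ⟪pv (pu z) p, N p⟫ = 0 ∧ ⟪pv (pv z) p, N p⟫ = 0))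
    -- `b` is a smooth orthonormal frame of the orthogonal complement of `span{z_u, z_v, N}`
    (b : Fin (n - 2) → ℝ × ℝ → EuclideanSpace ℝ (Fin (n + 1)))
    (hbs : ∀ i, ContDiffOn ℝ (⊤ : ℕ∞) (b i) D)
    (hb : ∀ p ∈ D, Orthonormal ℝ fun i => b i p)
    (hbzu : ∀ p ∈ D, ∀ i, ⟪b i p, pu z p⟫ = 0)
    (hbzv : ∀ p ∈ D, ∀ i, ⟪b i p, pv z p⟫ = 0)
    (hbN : ∀ p ∈ D, ∀ i, ⟪b i p, N p⟫ = 0) :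
    ∀ p ∈ D, ∀ w : Fin (n - 2) → ℝ,
      (let XX : (ℝ × ℝ) × (Fin (n - 2) → ℝ) → EuclideanSpace ℝ (Fin (n + 1)) :=
         fun q => z q.1 + ∑ i, q.2 i • b i q.1
       let NT : (ℝ × ℝ) × (Fin (n - 2) → ℝ) → EuclideanSpace ℝ (Fin (n + 1)) :=
         fun q => N q.1
       let q : (ℝ × ℝ) × (Fin (n - 2) → ℝ) := (p, w)
       -- at every parameter point where `𝒳` is an immersion:
       Function.Injective ⇑(fderiv ℝ XX q) →
       -- `N` is a unit vector orthogonal to all first-order partial derivatives of `𝒳`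
       ‖N p‖ = 1 ∧
       (∀ dir, ⟪N p, fderiv ℝ XX q dir⟫ = 0) ∧
       -- `N` does not depend on the `w`-variables
       (∀ i, fderiv ℝ NT q (0, Pi.single i 1) = 0) ∧
       -- the Gauss map `N` has rank exactly two
       Module.finrank ℝ (LinearMap.range (fderiv ℝ NT q : (ℝ × ℝ) × (Fin (n - 2) → ℝ) →ₗ[ℝ] EuclideanSpace ℝ (Fin (n + 1)))) = 2 ∧
       -- the shape operator has trace zero and exactly two nonzero eigenvalues, opposite
       -- to each other: there are eigen-directions with eigenvalues `ν` and `-ν`, `ν ≠ 0`,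
       -- and it vanishes on the `w`-directions
       (∃ ν : ℝ, ν ≠ 0 ∧ ∃ ξ₁ ξ₂ : (ℝ × ℝ) × (Fin (n - 2) → ℝ),
          fderiv ℝ XX q ξ₁ ≠ 0 ∧ fderiv ℝ XX q ξ₂ ≠ 0 ∧
          fderiv ℝ NT q ξ₁ = -ν • fderiv ℝ XX q ξ₁ ∧
          fderiv ℝ NT q ξ₂ = ν • fderiv ℝ XX q ξ₂)) := by
  intro p hp w
  intro XX NT q hinj
  classical
  have hr2 : (r : ℝ) ^ 2 ≠ 0 := by positivity
  -- differentiability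
  have hED : ∀ x ∈ D, DifferentiableAt ℝ z x := fun x hx =>
    (hz.contDiffAt (hD.mem_nhds hx)).differentiableAt (by simp)
  have hND : ∀ x ∈ D, DifferentiableAt ℝ N x := fun x hx =>
    (hN.contDiffAt (hD.mem_nhds hx)).differentiableAt (by simp)
  have hBD : ∀ i, ∀ x ∈ D, DifferentiableAt ℝ (b i) x := fun i x hx =>
    ((hbs i).contDiffAt (hD.mem_nhds hx)).differentiableAt (by simp)
  have hfzD : ContDiffOn ℝ (⊤ : ℕ∞) (fderiv ℝ z) D := hz.fderiv_of_isOpen hD (by simp)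
  have hpuD : ∀ x ∈ D, DifferentiableAt ℝ (pu z) x := by
    intro x hx
    have h1 : DifferentiableAt ℝ (fderiv ℝ z) x :=
      (hfzD.contDiffAt (hD.mem_nhds hx)).differentiableAt (by simp)
    exact (ContinuousLinearMap.apply ℝ (EuclideanSpace ℝ (Fin (n + 1)))
      (((1 : ℝ), (0 : ℝ)) : ℝ × ℝ)).differentiableAt.comp x h1
  have hpvD : ∀ x ∈ D, DifferentiableAt ℝ (pv z) x := by
    intro x hx
    have h1 : DifferentiableAt ℝ (fderiv ℝ z) x :=
      (hfzD.contDiffAt (hD.mem_nhds hx)).differentiableAt (by simp)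
    exact (ContinuousLinearMap.apply ℝ (EuclideanSpace ℝ (Fin (n + 1)))
      (((0 : ℝ), (1 : ℝ)) : ℝ × ℝ)).differentiableAt.comp x h1
  -- basic inner product identities on D
  have hzz : ∀ x ∈ D, ⟪z x, z x⟫ = r ^ 2 := by
    intro x hx
    rw [real_inner_self_eq_norm_sq, hsph x hx]
  have hNN : ∀ x ∈ D, ⟪N x, N x⟫ = 1 := by
    intro x hx
    rw [real_inner_self_eq_norm_sq, hNunit x hx]; norm_num
  have hzt : ∀ x ∈ D, ∀ ξ : ℝ × ℝ, ⟪fderiv ℝ z x ξ, z x⟫ = 0 := by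
    intro x hx ξ
    have h1 := aux_inner_fderiv hD hx (hED x hx) (hED x hx) hzz ξ
    have h2 := real_inner_comm (z x) (fderiv ℝ z x ξ)
    linarith
  have hpuz : ∀ x ∈ D, ⟪pu z x, z x⟫ = 0 := fun x hx => hzt x hx (1, 0)
  have hpvz : ∀ x ∈ D, ⟪pv z x, z x⟫ = 0 := fun x hx => hzt x hx (0, 1)
  -- membership of derivatives in W
  have hzuW : ∀ x ∈ D, ∀ ξ : ℝ × ℝ, fderiv ℝ z x ξ ∈ W := fun x hx ξ =>
    aux_fderiv_mem hD hx (hED x hx) hzW ξ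
  have hNuW : ∀ ξ : ℝ × ℝ, fderiv ℝ N p ξ ∈ W := fun ξ =>
    aux_fderiv_mem hD hp (hND p hp) hNW ξ
  have hpuzW : ∀ x ∈ D, pu z x ∈ W := fun x hx => hzuW x hx (1, 0)
  have hpvzW : ∀ x ∈ D, pv z x ∈ W := fun x hx => hzuW x hx (0, 1)
  have hfpuW : ∀ ξ : ℝ × ℝ, fderiv ℝ (pu z) p ξ ∈ W := fun ξ =>
    aux_fderiv_mem hD hp (hpuD p hp) hpuzW ξ
  have hfpvW : ∀ ξ : ℝ × ℝ, fderiv ℝ (pv z) p ξ ∈ W := fun ξ =>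
    aux_fderiv_mem hD hp (hpvD p hp) hpvzW ξ
  -- inner products at p
  have i1 : ⟪z p, z p⟫ = r ^ 2 := hzz p hp
  have i2 : ⟪N p, z p⟫ = 0 := hNz p hp
  have i3 : ⟪pu z p, z p⟫ = 0 := hpuz p hp
  have i4 : ⟪pv z p, z p⟫ = 0 := hpvz p hp
  have i5 : ⟪z p, N p⟫ = 0 := by rw [real_inner_comm]; exact i2
  have i6 : ⟪N p, N p⟫ = 1 := hNN p hp
  have i7 : ⟪pu z p, N p⟫ = 0 := by rw [real_inner_comm]; exact hNzu p hp
  have i8 : ⟪pv z p, N p⟫ = 0 := by rw [real_inner_comm]; exact hNzv p hp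
  have i9 : ⟪N p, pu z p⟫ = 0 := hNzu p hp
  have i10 : ⟪N p, pv z p⟫ = 0 := hNzv p hp
  have i11 : ⟪z p, pu z p⟫ = 0 := by rw [real_inner_comm]; exact i3
  have i12 : ⟪z p, pv z p⟫ = 0 := by rw [real_inner_comm]; exact i4
  have j1 : ∀ i, ⟪pu z p, b i p⟫ = 0 := fun i => by
    rw [real_inner_comm]; exact hbzu p hp i
  have j2 : ∀ i, ⟪pv z p, b i p⟫ = 0 := fun i => by
    rw [real_inner_comm]; exact hbzv p hp i
  have j3 : ∀ i, ⟪N p, b i p⟫ = 0 := fun i => by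
    rw [real_inner_comm]; exact hbN p hp i
  have j4 : ∀ i, ⟪b i p, N p⟫ = 0 := hbN p hp
  have j5 : ∀ i, ⟪b i p, pu z p⟫ = 0 := hbzu p hp
  have j6 : ∀ i, ⟪b i p, pv z p⟫ = 0 := hbzv p hp
  have himmp := himm p hp
  have hminp := hmin p hp
  have hnfp := hnf p hp
  -- decomposition of elements of W
  have hdec : ∀ y ∈ W, ∃ a c : ℝ,
      y = (⟪y, z p⟫ / r ^ 2) • z p + ⟪y, N p⟫ • N p + a • pu z p + c • pv z p := by
    intro y hy
    have hv : ∀ i : Fin 4,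
        (![z p, N p, pu z p, pv z p] : Fin 4 → EuclideanSpace ℝ (Fin (n + 1))) i ∈ W := by
      intro i
      fin_cases i
      · exact hzW p hp
      · exact hNW p hp
      · exact hpuzW p hp
      · exact hpvzW p hp
    have hli : LinearIndependent ℝ ![z p, N p, pu z p, pv z p] := by
      rw [Fintype.linearIndependent_iff]
      intro g hg
      rw [Fin.sum_univ_four] at hg
      simp only [Matrix.cons_val_zero, Matrix.cons_val_one, Matrix.head_cons,
        Matrix.cons_val_two, Matrix.tail_cons, Matrix.cons_val_three] at hg
      have h0 : g 0 = 0 := by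
        have h := congrArg (fun y => ⟪y, z p⟫) hg
        simp only [inner_add_left, real_inner_smul_left, inner_zero_left,
          i1, i2, i3, i4] at h
        have : g 0 * r ^ 2 = 0 := by linarith
        exact (mul_eq_zero.mp this).resolve_right hr2
      have h1 : g 1 = 0 := by
        have h := congrArg (fun y => ⟪y, N p⟫) hg
        simp only [inner_add_left, real_inner_smul_left, inner_zero_left,
          i5, i6, i7, i8] at h
        linarith
      have hg2 : g 2 • pu z p + g 3 • pv z p = 0 := by
        rw [h0, h1] at hg
        simpa using hg
      have h23 := Fintype.linearIndependent_iff.mp himmp ![g 2, g 3] (by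
        rw [Fin.sum_univ_two]
        simpa using hg2)
      intro i
      fin_cases i
      · exact h0
      · exact h1
      · exact h23 0
      · exact h23 1
    have hs : Submodule.span ℝ (Set.range ![z p, N p, pu z p, pv z p]) = W := by
      apply Submodule.eq_of_le_of_finrank_le
      · rw [Submodule.span_le]
        rintro x ⟨i, rfl⟩
        exact hv i
      · rw [hW, finrank_span_eq_card hli]
        simp
    have hy' : y ∈ Submodule.span ℝ (Set.range ![z p, N p, pu z p, pv z p]) := by
      rw [hs]; exact hy
    rw [Submodule.mem_span_range_iff_exists_fun] at hy'
    obtain ⟨cc, hcc⟩ := hy'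
    rw [Fin.sum_univ_four] at hcc
    simp only [Matrix.cons_val_zero, Matrix.cons_val_one, Matrix.head_cons,
      Matrix.cons_val_two, Matrix.tail_cons, Matrix.cons_val_three] at hcc
    refine ⟨cc 2, cc 3, ?_⟩
    have e0 : ⟪y, z p⟫ = cc 0 * r ^ 2 := by
      rw [← hcc]
      simp only [inner_add_left, real_inner_smul_left, i1, i2, i3, i4]
      ring
    have e1 : ⟪y, N p⟫ = cc 1 := by
      rw [← hcc]
      simp only [inner_add_left, real_inner_smul_left, i5, i6, i7, i8]
      ring
    have e2 : cc 0 * r ^ 2 / r ^ 2 = cc 0 := by field_simp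
    rw [e0, e1, e2, ← hcc]
  -- derivative of N is orthogonal to z and N
  have hNzt : ∀ ξ : ℝ × ℝ, ⟪fderiv ℝ N p ξ, z p⟫ = 0 := by
    rintro ⟨x1, x2⟩
    have h1 := aux_inner_fderiv hD hp (hND p hp) (hED p hp) hNz (x1, x2)
    have h2 : ⟪N p, fderiv ℝ z p (x1, x2)⟫ = 0 := by
      rw [aux_clm_eval (fderiv ℝ z p) x1 x2, inner_add_right, real_inner_smul_right,
        real_inner_smul_right]
      have e9 : ⟪N p, fderiv ℝ z p (1, 0)⟫ = 0 := i9
      have e10 : ⟪N p, fderiv ℝ z p (0, 1)⟫ = 0 := i10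
      rw [e9, e10]; ring
    linarith
  have hNNt : ∀ ξ : ℝ × ℝ, ⟪fderiv ℝ N p ξ, N p⟫ = 0 := by
    intro ξ
    have h1 := aux_inner_fderiv hD hp (hND p hp) (hND p hp) hNN ξ
    have h2 := real_inner_comm (N p) (fderiv ℝ N p ξ)
    linarith
  -- derivative of N lies in span of z_u, z_v
  have hNudec : ∀ ξ : ℝ × ℝ, ∃ a c : ℝ,
      fderiv ℝ N p ξ = a • pu z p + c • pv z p := by
    intro ξ
    obtain ⟨a, c, h⟩ := hdec (fderiv ℝ N p ξ) (hNuW ξ)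
    refine ⟨a, c, ?_⟩
    rw [h, hNzt ξ, hNNt ξ]
    simp
  -- derivative of N is orthogonal to the b's
  have hNbt : ∀ (ξ : ℝ × ℝ) i, ⟪fderiv ℝ N p ξ, b i p⟫ = 0 := by
    intro ξ i
    obtain ⟨a, c, h⟩ := hNudec ξ
    rw [h, inner_add_left, real_inner_smul_left, real_inner_smul_left, j1, j2]
    ring
  -- N is orthogonal to the derivatives of the b's
  have hNbd : ∀ (ξ : ℝ × ℝ) i, ⟪N p, fderiv ℝ (b i) p ξ⟫ = 0 := by
    intro ξ i
    have h1 := aux_inner_fderiv hD hp (hBD i p hp) (hND p hp)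
      (fun x hx => hbN x hx i) ξ
    have h2 : ⟪b i p, fderiv ℝ N p ξ⟫ = 0 := by
      rw [real_inner_comm]; exact hNbt ξ i
    have h3 := real_inner_comm (fderiv ℝ (b i) p ξ) (N p)
    linarith
  -- derivative of XX
  have hXXf : HasFDerivAt XX
      ((fderiv ℝ z p).comp (ContinuousLinearMap.fst ℝ (ℝ × ℝ) (Fin (n - 2) → ℝ))
        + ∑ i : Fin (n - 2),
          (w i • ((fderiv ℝ (b i) p).comp
              (ContinuousLinearMap.fst ℝ (ℝ × ℝ) (Fin (n - 2) → ℝ)))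
            + (((ContinuousLinearMap.proj i : (Fin (n - 2) → ℝ) →L[ℝ] ℝ)).comp
                (ContinuousLinearMap.snd ℝ (ℝ × ℝ) (Fin (n - 2) → ℝ))).smulRight (b i p))) q := by
    have h1 : HasFDerivAt (fun q' : (ℝ × ℝ) × (Fin (n - 2) → ℝ) => z q'.1)
        ((fderiv ℝ z p).comp (ContinuousLinearMap.fst ℝ (ℝ × ℝ) (Fin (n - 2) → ℝ))) q :=
      (hED p hp).hasFDerivAt.comp q hasFDerivAt_fst
    have h2 : ∀ i : Fin (n - 2),
        HasFDerivAt (fun q' : (ℝ × ℝ) × (Fin (n - 2) → ℝ) => q'.2 i • b i q'.1)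
          (w i • ((fderiv ℝ (b i) p).comp
              (ContinuousLinearMap.fst ℝ (ℝ × ℝ) (Fin (n - 2) → ℝ)))
            + (((ContinuousLinearMap.proj i : (Fin (n - 2) → ℝ) →L[ℝ] ℝ)).comp
                (ContinuousLinearMap.snd ℝ (ℝ × ℝ) (Fin (n - 2) → ℝ))).smulRight (b i p)) q := by
      intro i
      have hc : HasFDerivAt (fun q' : (ℝ × ℝ) × (Fin (n - 2) → ℝ) => q'.2 i)
          (((ContinuousLinearMap.proj i : (Fin (n - 2) → ℝ) →L[ℝ] ℝ)).comp
            (ContinuousLinearMap.snd ℝ (ℝ × ℝ) (Fin (n - 2) → ℝ))) q :=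
        (ContinuousLinearMap.proj i : (Fin (n - 2) → ℝ) →L[ℝ] ℝ).hasFDerivAt.comp q
          hasFDerivAt_snd
      have hf : HasFDerivAt (fun q' : (ℝ × ℝ) × (Fin (n - 2) → ℝ) => b i q'.1)
          ((fderiv ℝ (b i) p).comp (ContinuousLinearMap.fst ℝ (ℝ × ℝ) (Fin (n - 2) → ℝ))) q :=
        (hBD i p hp).hasFDerivAt.comp q hasFDerivAt_fst
      exact hc.smul hf
    exact h1.add (HasFDerivAt.fun_sum (fun i _ => h2 i))
  have hXXap : ∀ (v : ℝ × ℝ) (s : Fin (n - 2) → ℝ),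
      fderiv ℝ XX q (v, s)
        = fderiv ℝ z p v + ∑ i, (w i • fderiv ℝ (b i) p v + s i • b i p) := by
    intro v s
    rw [hXXf.fderiv]
    simp only [ContinuousLinearMap.add_apply, ContinuousLinearMap.comp_apply,
      ContinuousLinearMap.coe_fst', ContinuousLinearMap.coe_snd',
      ContinuousLinearMap.sum_apply, ContinuousLinearMap.smul_apply,
      ContinuousLinearMap.smulRight_apply, ContinuousLinearMap.proj_apply]
  -- derivative of NT
  have hNTf : HasFDerivAt NT
      ((fderiv ℝ N p).comp (ContinuousLinearMap.fst ℝ (ℝ × ℝ) (Fin (n - 2) → ℝ))) q :=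
    (hND p hp).hasFDerivAt.comp q hasFDerivAt_fst
  have hNTap : ∀ (v : ℝ × ℝ) (s : Fin (n - 2) → ℝ),
      fderiv ℝ NT q (v, s) = fderiv ℝ N p v := by
    intro v s
    rw [hNTf.fderiv]
    simp only [ContinuousLinearMap.comp_apply, ContinuousLinearMap.coe_fst']
  -- second fundamental form relations
  have hsymm : pu (pv z) p = pv (pu z) p := aux_symm hD hz hp
  have hr1 : ⟪N p, pu (pu z) p⟫ + ⟪fderiv ℝ N p (1, 0), pu z p⟫ = 0 :=
    aux_inner_fderiv hD hp (hND p hp) (hpuD p hp) hNzu (1, 0)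
  have hr2 : ⟪N p, pv (pu z) p⟫ + ⟪fderiv ℝ N p (0, 1), pu z p⟫ = 0 :=
    aux_inner_fderiv hD hp (hND p hp) (hpuD p hp) hNzu (0, 1)
  have hr3 : ⟪N p, pu (pv z) p⟫ + ⟪fderiv ℝ N p (1, 0), pv z p⟫ = 0 :=
    aux_inner_fderiv hD hp (hND p hp) (hpvD p hp) hNzv (1, 0)
  have hr4 : ⟪N p, pv (pv z) p⟫ + ⟪fderiv ℝ N p (0, 1), pv z p⟫ = 0 :=
    aux_inner_fderiv hD hp (hND p hp) (hpvD p hp) hNzv (0, 1)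
  rw [hsymm] at hr3
  -- Weingarten coefficients
  obtain ⟨α, β, hNu⟩ := hNudec (1, 0)
  obtain ⟨γ, δ, hNv⟩ := hNudec (0, 1)
  have hw1 : α * ⟪pu z p, pu z p⟫ + β * ⟪pu z p, pv z p⟫ = -⟪pu (pu z) p, N p⟫ := by
    have h := hr1
    rw [hNu, inner_add_left, real_inner_smul_left, real_inner_smul_left,
      real_inner_comm (pu z p) (pv z p), real_inner_comm (pu (pu z) p) (N p)] at h
    linarith
  have hw2 : α * ⟪pu z p, pv z p⟫ + β * ⟪pv z p, pv z p⟫ = -⟪pv (pu z) p, N p⟫ := by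
    have h := hr3
    rw [hNu, inner_add_left, real_inner_smul_left, real_inner_smul_left,
      real_inner_comm (pv (pu z) p) (N p)] at h
    linarith
  have hw3 : γ * ⟪pu z p, pu z p⟫ + δ * ⟪pu z p, pv z p⟫ = -⟪pv (pu z) p, N p⟫ := by
    have h := hr2
    rw [hNv, inner_add_left, real_inner_smul_left, real_inner_smul_left,
      real_inner_comm (pu z p) (pv z p), real_inner_comm (pv (pu z) p) (N p)] at h
    linarith
  have hw4 : γ * ⟪pu z p, pv z p⟫ + δ * ⟪pv z p, pv z p⟫ = -⟪pv (pv z) p, N p⟫ := by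
    have h := hr4
    rw [hNv, inner_add_left, real_inner_smul_left, real_inner_smul_left,
      real_inner_comm (pv (pv z) p) (N p)] at h
    linarith
  -- positivity of the first fundamental form
  have hzune : pu z p ≠ 0 := by
    have h := himmp.ne_zero 0
    simpa using h
  have hE : 0 < ⟪pu z p, pu z p⟫ := by
    rw [real_inner_self_eq_norm_sq]
    exact pow_pos (norm_pos_iff.mpr hzune) 2
  have hzvne : pv z p ≠ 0 := by
    have h := himmp.ne_zero 1
    simpa using h
  have hG : 0 < ⟪pv z p, pv z p⟫ := by
    rw [real_inner_self_eq_norm_sq]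
    exact pow_pos (norm_pos_iff.mpr hzvne) 2
  have hpair : ∀ a c : ℝ, ¬(a = 0 ∧ c = 0) → a • pu z p + c • pv z p ≠ 0 := by
    intro a c hne h0
    have h := Fintype.linearIndependent_iff.mp himmp ![a, c] (by
      rw [Fin.sum_univ_two]
      simpa using h0)
    exact hne ⟨h 0, h 1⟩
  have hDelta : 0 < ⟪pu z p, pu z p⟫ * ⟪pv z p, pv z p⟫
      - ⟪pu z p, pv z p⟫ * ⟪pu z p, pv z p⟫ := by
    have hvne : (-⟪pu z p, pv z p⟫) • pu z p + ⟪pu z p, pu z p⟫ • pv z p ≠ 0 :=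
      hpair _ _ (fun hc => (ne_of_gt hE) hc.2)
    have h1 : 0 < ⟪(-⟪pu z p, pv z p⟫) • pu z p + ⟪pu z p, pu z p⟫ • pv z p,
        (-⟪pu z p, pv z p⟫) • pu z p + ⟪pu z p, pu z p⟫ • pv z p⟫ := by
      rw [real_inner_self_eq_norm_sq]
      exact pow_pos (norm_pos_iff.mpr hvne) 2
    rw [inner_add_left, inner_add_right, inner_add_right, real_inner_smul_left,
      real_inner_smul_left, real_inner_smul_left, real_inner_smul_left,
      real_inner_smul_right, real_inner_smul_right, real_inner_smul_right,
      real_inner_smul_right, real_inner_comm (pu z p) (pv z p)] at h1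
    nlinarith [h1, hE]
  -- the second fundamental form is indefinite
  have heg : ⟪pu (pu z) p, N p⟫ * ⟪pv (pv z) p, N p⟫ - ⟪pv (pu z) p, N p⟫ * ⟪pv (pu z) p, N p⟫ < 0 := by
    rcases eq_or_ne (⟪pv (pu z) p, N p⟫ : ℝ) 0 with hff | hff
    · have hm := hminp
      rw [hff] at hm
      have hee : (⟪pu (pu z) p, N p⟫ : ℝ) ≠ 0 := by
        intro h0
        have hgg : (⟪pv (pv z) p, N p⟫ : ℝ) = 0 := by
          rw [h0] at hm
          nlinarith [hE]
        exact hnfp ⟨h0, hff, hgg⟩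
      have hsq : 0 < ⟪pu (pu z) p, N p⟫ ^ 2 :=
        lt_of_le_of_ne (sq_nonneg _) (Ne.symm (pow_ne_zero 2 hee))
      have h2 : ⟪pu z p, pu z p⟫ * (⟪pu (pu z) p, N p⟫ * ⟪pv (pv z) p, N p⟫) = -(⟪pv z p, pv z p⟫ * ⟪pu (pu z) p, N p⟫ ^ 2) := by
        linear_combination ⟪pu (pu z) p, N p⟫ * hm
      rw [hff]
      nlinarith [h2, mul_pos hG hsq, hE]
    · have hsq : 0 < ⟪pv (pu z) p, N p⟫ ^ 2 :=
        lt_of_le_of_ne (sq_nonneg _) (Ne.symm (pow_ne_zero 2 hff))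
      have h1sq : (⟪pv z p, pv z p⟫ * ⟪pu (pu z) p, N p⟫ + ⟪pu z p, pu z p⟫ * ⟪pv (pv z) p, N p⟫) ^ 2 = 4 * ⟪pu z p, pv z p⟫ ^ 2 * ⟪pv (pu z) p, N p⟫ ^ 2 := by
        have h1 : ⟪pv z p, pv z p⟫ * ⟪pu (pu z) p, N p⟫ + ⟪pu z p, pu z p⟫ * ⟪pv (pv z) p, N p⟫ = 2 * ⟪pu z p, pv z p⟫ * ⟪pv (pu z) p, N p⟫ := by linarith [hminp]
        rw [h1]; ring
      have h2 : 4 * (⟪pu z p, pu z p⟫ * ⟪pv z p, pv z p⟫) * (⟪pu (pu z) p, N p⟫ * ⟪pv (pv z) p, N p⟫) ≤ 4 * ⟪pu z p, pv z p⟫ ^ 2 * ⟪pv (pu z) p, N p⟫ ^ 2 := by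
        nlinarith [h1sq, sq_nonneg (⟪pv z p, pv z p⟫ * ⟪pu (pu z) p, N p⟫ - ⟪pu z p, pu z p⟫ * ⟪pv (pv z) p, N p⟫)]
      nlinarith [h2, mul_pos hDelta hsq, mul_pos hE hG]
  -- solving for the Weingarten coefficients
  have hA1 : α * (⟪pu z p, pu z p⟫ * ⟪pv z p, pv z p⟫ - ⟪pu z p, pv z p⟫ * ⟪pu z p, pv z p⟫) = ⟪pv (pu z) p, N p⟫ * ⟪pu z p, pv z p⟫ - ⟪pu (pu z) p, N p⟫ * ⟪pv z p, pv z p⟫ := by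
    linear_combination ⟪pv z p, pv z p⟫ * hw1 - ⟪pu z p, pv z p⟫ * hw2
  have hA2 : β * (⟪pu z p, pu z p⟫ * ⟪pv z p, pv z p⟫ - ⟪pu z p, pv z p⟫ * ⟪pu z p, pv z p⟫) = ⟪pu (pu z) p, N p⟫ * ⟪pu z p, pv z p⟫ - ⟪pv (pu z) p, N p⟫ * ⟪pu z p, pu z p⟫ := by
    linear_combination ⟪pu z p, pu z p⟫ * hw2 - ⟪pu z p, pv z p⟫ * hw1
  have hA3 : γ * (⟪pu z p, pu z p⟫ * ⟪pv z p, pv z p⟫ - ⟪pu z p, pv z p⟫ * ⟪pu z p, pv z p⟫) = ⟪pv (pv z) p, N p⟫ * ⟪pu z p, pv z p⟫ - ⟪pv (pu z) p, N p⟫ * ⟪pv z p, pv z p⟫ := by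
    linear_combination ⟪pv z p, pv z p⟫ * hw3 - ⟪pu z p, pv z p⟫ * hw4
  have hA4 : δ * (⟪pu z p, pu z p⟫ * ⟪pv z p, pv z p⟫ - ⟪pu z p, pv z p⟫ * ⟪pu z p, pv z p⟫) = ⟪pv (pu z) p, N p⟫ * ⟪pu z p, pv z p⟫ - ⟪pv (pv z) p, N p⟫ * ⟪pu z p, pu z p⟫ := by
    linear_combination ⟪pu z p, pu z p⟫ * hw4 - ⟪pu z p, pv z p⟫ * hw3
  have hδα : δ = -α := by
    have h0 : (α + δ) * (⟪pu z p, pu z p⟫ * ⟪pv z p, pv z p⟫ - ⟪pu z p, pv z p⟫ * ⟪pu z p, pv z p⟫) = 0 := by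
      linear_combination hA1 + hA4 - hminp
    rcases mul_eq_zero.mp h0 with h | h
    · linarith
    · exact absurd h (ne_of_gt hDelta)
  have hkey : (α ^ 2 + β * γ) * ((⟪pu z p, pu z p⟫ * ⟪pv z p, pv z p⟫ - ⟪pu z p, pv z p⟫ * ⟪pu z p, pv z p⟫) * (⟪pu z p, pu z p⟫ * ⟪pv z p, pv z p⟫ - ⟪pu z p, pv z p⟫ * ⟪pu z p, pv z p⟫)) = (⟪pv (pu z) p, N p⟫ * ⟪pv (pu z) p, N p⟫ - ⟪pu (pu z) p, N p⟫ * ⟪pv (pv z) p, N p⟫) * (⟪pu z p, pu z p⟫ * ⟪pv z p, pv z p⟫ - ⟪pu z p, pv z p⟫ * ⟪pu z p, pv z p⟫) := by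
    linear_combination (α * (⟪pu z p, pu z p⟫ * ⟪pv z p, pv z p⟫ - ⟪pu z p, pv z p⟫ * ⟪pu z p, pv z p⟫) + (⟪pv (pu z) p, N p⟫ * ⟪pu z p, pv z p⟫ - ⟪pu (pu z) p, N p⟫ * ⟪pv z p, pv z p⟫)) * hA1
      + γ * (⟪pu z p, pu z p⟫ * ⟪pv z p, pv z p⟫ - ⟪pu z p, pv z p⟫ * ⟪pu z p, pv z p⟫) * hA2 + (⟪pu (pu z) p, N p⟫ * ⟪pu z p, pv z p⟫ - ⟪pv (pu z) p, N p⟫ * ⟪pu z p, pu z p⟫) * hA3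
      + (⟪pu (pu z) p, N p⟫ * ⟪pv z p, pv z p⟫ - ⟪pv (pu z) p, N p⟫ * ⟪pu z p, pv z p⟫) * hminp
  have hαβγ : 0 < α ^ 2 + β * γ := by
    have hpos : 0 < (⟪pv (pu z) p, N p⟫ * ⟪pv (pu z) p, N p⟫ - ⟪pu (pu z) p, N p⟫ * ⟪pv (pv z) p, N p⟫) * (⟪pu z p, pu z p⟫ * ⟪pv z p, pv z p⟫ - ⟪pu z p, pv z p⟫ * ⟪pu z p, pv z p⟫) :=
      mul_pos (by linarith [heg]) hDelta
    nlinarith [hkey, hpos, mul_pos hDelta hDelta]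
  -- eigenvectors of the two-dimensional Weingarten operator
  have eig : ∀ lam : ℝ, lam ^ 2 = α ^ 2 + β * γ →
      ∃ a c : ℝ, ¬(a = 0 ∧ c = 0) ∧ α * a + γ * c = lam * a ∧ β * a + δ * c = lam * c := by
    intro lam hlam
    rcases eq_or_ne γ 0 with hγ | hγ
    · have hα : α ≠ 0 := by
        intro h0
        rw [h0, hγ] at hαβγ
        simp at hαβγ
      have hcase : lam = α ∨ lam = -α := by
        have h2 : (lam - α) * (lam + α) = 0 := by
          have h3 : lam ^ 2 = α ^ 2 := by rw [hlam, hγ]; ring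
          linear_combination h3
        rcases mul_eq_zero.mp h2 with h | h
        · left; linarith
        · right; linarith
      rcases hcase with h | h
      · exact ⟨2 * α, β, fun hc => hα (by linarith [hc.1]),
          by rw [hγ, h]; ring, by rw [hδα, h]; ring⟩
      · exact ⟨0, 1, fun hc => one_ne_zero hc.2, by rw [hγ, h]; ring,
          by rw [hδα, h]; ring⟩
    · refine ⟨γ, lam - α, fun hc => hγ hc.1, by ring, ?_⟩
      rw [hδα]
      linear_combination -hlam
  -- vanishing criterion via the full frame
  have horth : ∀ j k : Fin (n - 2), ⟪b j p, b k p⟫ = if j = k then (1 : ℝ) else 0 :=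
    fun j k => orthonormal_iff_ite.mp (hb p hp) j k
  have hzero : ∀ y : EuclideanSpace ℝ (Fin (n + 1)),
      ⟪pu z p, y⟫ = 0 → ⟪pv z p, y⟫ = 0 → ⟪N p, y⟫ = 0 → (∀ j, ⟪b j p, y⟫ = 0) →
      y = 0 := by
    intro y h1 h2 h3 h4
    set t : Fin 3 ⊕ Fin (n - 2) → EuclideanSpace ℝ (Fin (n + 1)) :=
      Sum.elim ![pu z p, pv z p, N p] (fun j => b j p) with ht
    have hli : LinearIndependent ℝ t := by
      rw [Fintype.linearIndependent_iff]
      intro g hg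
      have key : ∀ y' : EuclideanSpace ℝ (Fin (n + 1)),
          (⟪y', ∑ k, g k • t k⟫ : ℝ) = ∑ k, g k * ⟪y', t k⟫ := by
        intro y'
        rw [inner_sum]
        exact Finset.sum_congr rfl fun k _ => real_inner_smul_right _ _ _
      have expand : ∀ y' : EuclideanSpace ℝ (Fin (n + 1)),
          (∑ k, g k * ⟪y', t k⟫ : ℝ)
            = g (Sum.inl 0) * ⟪y', pu z p⟫ + g (Sum.inl 1) * ⟪y', pv z p⟫
              + g (Sum.inl 2) * ⟪y', N p⟫ + ∑ j, g (Sum.inr j) * ⟪y', b j p⟫ := by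
        intro y'
        rw [Fintype.sum_sum_type, Fin.sum_univ_three]
        simp only [ht, Sum.elim_inl, Sum.elim_inr, Matrix.cons_val_zero,
          Matrix.cons_val_one, Matrix.head_cons, Matrix.cons_val_two, Matrix.tail_cons]
      have hzeroinner : ∀ y' : EuclideanSpace ℝ (Fin (n + 1)),
          g (Sum.inl 0) * ⟪y', pu z p⟫ + g (Sum.inl 1) * ⟪y', pv z p⟫
              + g (Sum.inl 2) * ⟪y', N p⟫ + (∑ j, g (Sum.inr j) * ⟪y', b j p⟫) = 0 := by
        intro y'
        rw [← expand, ← key, hg, inner_zero_right]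
      have hN0 : g (Sum.inl 2) = 0 := by
        have h := hzeroinner (N p)
        rw [i9, i10, i6] at h
        have hsz : (∑ j, g (Sum.inr j) * ⟪N p, b j p⟫ : ℝ) = 0 :=
          Finset.sum_eq_zero fun j _ => by rw [j3 j]; ring
        rw [hsz] at h
        linarith
      have hb0 : ∀ j, g (Sum.inr j) = 0 := by
        intro j
        have h := hzeroinner (b j p)
        rw [j5 j, j6 j, j4 j] at h
        have hsz : (∑ k, g (Sum.inr k) * ⟪b j p, b k p⟫ : ℝ) = g (Sum.inr j) := by
          simp only [horth, mul_ite, mul_one, mul_zero]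
          simp
        rw [hsz] at h
        linarith
      have hgg : g (Sum.inl 0) • pu z p + g (Sum.inl 1) • pv z p = 0 := by
        have h := hg
        rw [Fintype.sum_sum_type, Fin.sum_univ_three] at h
        simp only [ht, Sum.elim_inl, Sum.elim_inr, Matrix.cons_val_zero,
          Matrix.cons_val_one, Matrix.head_cons, Matrix.cons_val_two,
          Matrix.tail_cons] at h
        rw [hN0, zero_smul, add_zero] at h
        have hsz : (∑ j, g (Sum.inr j) • b j p) = 0 :=
          Finset.sum_eq_zero fun j _ => by rw [hb0 j, zero_smul]
        rw [hsz, add_zero] at h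
        exact h
      have h01 := Fintype.linearIndependent_iff.mp himmp
        ![g (Sum.inl 0), g (Sum.inl 1)] (by
          rw [Fin.sum_univ_two]
          simpa using hgg)
      intro k
      rcases k with k | j
      · fin_cases k
        · exact h01 0
        · exact h01 1
        · exact hN0
      · exact hb0 j
    have hcard : Fintype.card (Fin 3 ⊕ Fin (n - 2)) = n + 1 := by
      simp only [Fintype.card_sum, Fintype.card_fin]
      omega
    have hsp : Submodule.span ℝ (Set.range t) = ⊤ := by
      apply Submodule.eq_top_of_finrank_eq
      rw [finrank_span_eq_card hli, hcard, finrank_euclideanSpace, Fintype.card_fin]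
    have hy : y ∈ Submodule.span ℝ (Set.range t) := by
      rw [hsp]; exact Submodule.mem_top
    rw [Submodule.mem_span_range_iff_exists_fun] at hy
    obtain ⟨cc, hcc⟩ := hy
    have hyy : (⟪y, y⟫ : ℝ) = 0 := by
      nth_rewrite 1 [← hcc]
      rw [sum_inner]
      apply Finset.sum_eq_zero
      intro k _
      rw [real_inner_smul_left]
      rcases k with k | j
      · fin_cases k
        · exact mul_eq_zero_of_right _ h1
        · exact mul_eq_zero_of_right _ h2
        · exact mul_eq_zero_of_right _ h3
      · exact mul_eq_zero_of_right _ (h4 j)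
    exact inner_self_eq_zero.mp hyy
  -- tangential derivatives of the frame fields
  have hbu : ∀ (i : Fin (n - 2)) (a c : ℝ),
      ⟪pu z p, fderiv ℝ (b i) p (a, c)⟫
        = ((a * ⟪pu z p, pu z p⟫ + c * ⟪pu z p, pv z p⟫) / r ^ 2) * ⟪b i p, z p⟫ := by
    intro i a c
    have step1 : ⟪b i p, fderiv ℝ (pu z) p (a, c)⟫
        + ⟪fderiv ℝ (b i) p (a, c), pu z p⟫ = 0 :=
      aux_inner_fderiv hD hp (hBD i p hp) (hpuD p hp) (fun x hx => hbzu x hx i) (a, c)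
    have step3 : ⟪fderiv ℝ (pu z) p (a, c), z p⟫ = -(a * ⟪pu z p, pu z p⟫ + c * ⟪pu z p, pv z p⟫) := by
      have h1 := aux_inner_fderiv hD hp (hpuD p hp) (hED p hp) hpuz (a, c)
      have h2 : ⟪pu z p, fderiv ℝ z p (a, c)⟫ = a * ⟪pu z p, pu z p⟫ + c * ⟪pu z p, pv z p⟫ := by
        rw [aux_clm_eval (fderiv ℝ z p) a c, inner_add_right, real_inner_smul_right,
          real_inner_smul_right]
        have e1 : ⟪pu z p, fderiv ℝ z p (1, 0)⟫ = ⟪pu z p, pu z p⟫ := rfl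
        have e2 : ⟪pu z p, fderiv ℝ z p (0, 1)⟫ = ⟪pu z p, pv z p⟫ := rfl
        rw [e1, e2]
      linarith
    obtain ⟨a', c', hdecP⟩ := hdec (fderiv ℝ (pu z) p (a, c)) (hfpuW (a, c))
    have step4 : ⟪b i p, fderiv ℝ (pu z) p (a, c)⟫
        = (⟪fderiv ℝ (pu z) p (a, c), z p⟫ / r ^ 2) * ⟪b i p, z p⟫ := by
      conv_lhs => rw [hdecP]
      rw [inner_add_right, inner_add_right, inner_add_right, real_inner_smul_right,
        real_inner_smul_right, real_inner_smul_right, real_inner_smul_right,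
        j4 i, j5 i, j6 i]
      ring
    have hfinal := step1
    rw [step4, step3] at hfinal
    have hcomm := real_inner_comm (fderiv ℝ (b i) p (a, c)) (pu z p)
    linear_combination hcomm + hfinal
  have hbv : ∀ (i : Fin (n - 2)) (a c : ℝ),
      ⟪pv z p, fderiv ℝ (b i) p (a, c)⟫
        = ((a * ⟪pu z p, pv z p⟫ + c * ⟪pv z p, pv z p⟫) / r ^ 2) * ⟪b i p, z p⟫ := by
    intro i a c
    have step1 : ⟪b i p, fderiv ℝ (pv z) p (a, c)⟫
        + ⟪fderiv ℝ (b i) p (a, c), pv z p⟫ = 0 :=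
      aux_inner_fderiv hD hp (hBD i p hp) (hpvD p hp) (fun x hx => hbzv x hx i) (a, c)
    have step3 : ⟪fderiv ℝ (pv z) p (a, c), z p⟫ = -(a * ⟪pu z p, pv z p⟫ + c * ⟪pv z p, pv z p⟫) := by
      have h1 := aux_inner_fderiv hD hp (hpvD p hp) (hED p hp) hpvz (a, c)
      have h2 : ⟪pv z p, fderiv ℝ z p (a, c)⟫ = a * ⟪pu z p, pv z p⟫ + c * ⟪pv z p, pv z p⟫ := by
        rw [aux_clm_eval (fderiv ℝ z p) a c, inner_add_right, real_inner_smul_right,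
          real_inner_smul_right]
        have e1 : ⟪pv z p, fderiv ℝ z p (1, 0)⟫ = ⟪pu z p, pv z p⟫ := real_inner_comm _ _
        have e2 : ⟪pv z p, fderiv ℝ z p (0, 1)⟫ = ⟪pv z p, pv z p⟫ := rfl
        rw [e1, e2]
      linarith
    obtain ⟨a', c', hdecP⟩ := hdec (fderiv ℝ (pv z) p (a, c)) (hfpvW (a, c))
    have step4 : ⟪b i p, fderiv ℝ (pv z) p (a, c)⟫
        = (⟪fderiv ℝ (pv z) p (a, c), z p⟫ / r ^ 2) * ⟪b i p, z p⟫ := by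
      conv_lhs => rw [hdecP]
      rw [inner_add_right, inner_add_right, inner_add_right, real_inner_smul_right,
        real_inner_smul_right, real_inner_smul_right, real_inner_smul_right,
        j4 i, j5 i, j6 i]
      ring
    have hfinal := step1
    rw [step4, step3] at hfinal
    have hcomm := real_inner_comm (fderiv ℝ (b i) p (a, c)) (pv z p)
    linear_combination hcomm + hfinal
  -- the key derivative computation for XX
  have hmkey : ∀ a c : ℝ, ∃ ch : Fin (n - 2) → ℝ,
      fderiv ℝ XX q ((a, c), ch)
        = (1 + (∑ i, w i * ⟪b i p, z p⟫) / r ^ 2) • (a • pu z p + c • pv z p) := by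
    intro a c
    set m : EuclideanSpace ℝ (Fin (n + 1)) := ∑ i, w i • fderiv ℝ (b i) p (a, c) with hm
    refine ⟨fun j => -⟪b j p, m⟫, ?_⟩
    rw [hXXap]
    beta_reduce
    have hsum : (∑ i, (w i • fderiv ℝ (b i) p (a, c) + (-⟪b i p, m⟫) • b i p))
        = m + ∑ i, (-⟪b i p, m⟫) • b i p := by
      rw [Finset.sum_add_distrib, hm]
    rw [hsum, aux_clm_eval (fderiv ℝ z p) a c]
    have e1 : fderiv ℝ z p (1, 0) = pu z p := rfl
    have e2 : fderiv ℝ z p (0, 1) = pv z p := rfl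
    rw [e1, e2]
    have hmzu : (⟪pu z p, m⟫ : ℝ)
        = ((a * ⟪pu z p, pu z p⟫ + c * ⟪pu z p, pv z p⟫) / r ^ 2) * ∑ i, w i * ⟪b i p, z p⟫ := by
      rw [hm, inner_sum, Finset.mul_sum]
      apply Finset.sum_congr rfl
      intro i _
      rw [real_inner_smul_right, hbu i a c]
      ring
    have hmzv : (⟪pv z p, m⟫ : ℝ)
        = ((a * ⟪pu z p, pv z p⟫ + c * ⟪pv z p, pv z p⟫) / r ^ 2) * ∑ i, w i * ⟪b i p, z p⟫ := by
      rw [hm, inner_sum, Finset.mul_sum]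
      apply Finset.sum_congr rfl
      intro i _
      rw [real_inner_smul_right, hbv i a c]
      ring
    have hmN : (⟪N p, m⟫ : ℝ) = 0 := by
      rw [hm, inner_sum]
      apply Finset.sum_eq_zero
      intro i _
      rw [real_inner_smul_right, hNbd (a, c) i]
      ring
    have hfin : (a • pu z p + c • pv z p + (m + ∑ i, (-⟪b i p, m⟫) • b i p))
        - (1 + (∑ i, w i * ⟪b i p, z p⟫) / r ^ 2) • (a • pu z p + c • pv z p) = 0 := by
      apply hzero
      · simp only [inner_sub_right, inner_add_right, real_inner_smul_right, inner_sum]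
        rw [hmzu]
        simp only [j1, mul_zero, neg_mul, Finset.sum_const_zero]
        have e3 : (∑ i, -⟪b i p, m⟫ * (0:ℝ)) = 0 := by
          apply Finset.sum_eq_zero; intro i _; ring
        ring
      · simp only [inner_sub_right, inner_add_right, real_inner_smul_right, inner_sum]
        rw [hmzv]
        simp only [j2, mul_zero, neg_mul, Finset.sum_const_zero]
        rw [real_inner_comm (pu z p) (pv z p)]
        ring
      · simp only [inner_sub_right, inner_add_right, real_inner_smul_right, inner_sum]
        rw [hmN]
        simp only [i9, i10, j3, mul_zero, neg_mul, Finset.sum_const_zero]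
        ring
      · intro j
        simp only [inner_sub_right, inner_add_right, real_inner_smul_right, inner_sum]
        rw [j5 j, j6 j]
        have e4 : (∑ i, (-⟪b i p, m⟫) * ⟪b j p, b i p⟫ : ℝ) = -⟪b j p, m⟫ := by
          simp only [horth, mul_ite, mul_one, mul_zero]
          simp
        rw [e4]
        ring
    have := sub_eq_zero.mp hfin
    exact this
  -- injectivity forces the scaling factor to be nonzero
  have hKne : 1 + (∑ i, w i * ⟪b i p, z p⟫) / r ^ 2 ≠ 0 := by
    intro h0
    obtain ⟨ch, hch⟩ := hmkey 1 0
    rw [h0, zero_smul] at hch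
    have h2 : ((((1 : ℝ), (0 : ℝ)) : ℝ × ℝ), ch) = (0 : (ℝ × ℝ) × (Fin (n - 2) → ℝ)) :=
      hinj (by rw [hch, map_zero])
    have h3 := congrArg (fun x => x.1.1) h2
    norm_num at h3
  -- eigenvector equation for the Gauss map
  have hDNac : ∀ a c lam : ℝ, α * a + γ * c = lam * a → β * a + δ * c = lam * c →
      fderiv ℝ N p (a, c) = lam • (a • pu z p + c • pv z p) := by
    intro a c lam h1 h2
    rw [aux_clm_eval (fderiv ℝ N p) a c, hNu, hNv]
    have h5 : lam • (a • pu z p + c • pv z p)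
        = (α * a + γ * c) • pu z p + (β * a + δ * c) • pv z p := by
      rw [h1, h2]
      module
    rw [h5]
    module
  -- assemble the conclusion
  refine ⟨hNunit p hp, ?_, ?_, ?_, ?_⟩
  · -- N is orthogonal to all derivatives of XX
    intro dir
    obtain ⟨⟨d1, d2⟩, ds⟩ := dir
    rw [hXXap, inner_add_right, inner_sum]
    have hA : ⟪N p, fderiv ℝ z p (d1, d2)⟫ = 0 := by
      rw [aux_clm_eval (fderiv ℝ z p) d1 d2, inner_add_right, real_inner_smul_right,
        real_inner_smul_right]
      have e9 : ⟪N p, fderiv ℝ z p (1, 0)⟫ = 0 := i9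
      have e10 : ⟪N p, fderiv ℝ z p (0, 1)⟫ = 0 := i10
      rw [e9, e10]; ring
    have hB : (∑ i, ⟪N p, w i • fderiv ℝ (b i) p (d1, d2) + ds i • b i p⟫ : ℝ) = 0 :=
      Finset.sum_eq_zero fun i _ => by
        rw [inner_add_right, real_inner_smul_right, real_inner_smul_right,
          hNbd (d1, d2) i, j3 i]
        ring
    rw [hA, hB]
    ring
  · -- N does not depend on the w-variables
    intro i
    rw [hNTap]
    exact map_zero _
  · -- the Gauss map has rank two
    have hNuNv : LinearIndependent ℝ ![fderiv ℝ N p (1, 0), fderiv ℝ N p (0, 1)] := by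
      rw [Fintype.linearIndependent_iff]
      intro g hg
      rw [Fin.sum_univ_two] at hg
      simp only [Matrix.cons_val_zero, Matrix.cons_val_one, Matrix.head_cons] at hg
      rw [hNu, hNv] at hg
      have hg' : (g 0 * α + g 1 * γ) • pu z p + (g 0 * β + g 1 * δ) • pv z p = 0 := by
        rw [← hg]; module
      have h2 := Fintype.linearIndependent_iff.mp himmp
        ![g 0 * α + g 1 * γ, g 0 * β + g 1 * δ] (by
          rw [Fin.sum_univ_two]
          simpa using hg')
      have h20 := h2 0
      have h21 := h2 1
      simp only [Matrix.cons_val_zero, Matrix.cons_val_one, Matrix.head_cons] at h20 h21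
      have hdet : α * δ - β * γ ≠ 0 := by
        rw [hδα]
        intro h
        nlinarith [hαβγ]
      intro k
      fin_cases k
      · have h5 : g 0 * (α * δ - β * γ) = 0 := by
          linear_combination δ * h20 - γ * h21
        exact (mul_eq_zero.mp h5).resolve_right hdet
      · have h5 : g 1 * (α * δ - β * γ) = 0 := by
          linear_combination α * h21 - β * h20
        exact (mul_eq_zero.mp h5).resolve_right hdet
    have hrange : LinearMap.range (fderiv ℝ NT q : (ℝ × ℝ) × (Fin (n - 2) → ℝ) →ₗ[ℝ] EuclideanSpace ℝ (Fin (n + 1)))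
        = Submodule.span ℝ (Set.range ![fderiv ℝ N p (1, 0), fderiv ℝ N p (0, 1)]) := by
      apply le_antisymm
      · rintro y hy
        obtain ⟨ξ, rfl⟩ := hy
        obtain ⟨⟨x1, x2⟩, s'⟩ := ξ
        rw [ContinuousLinearMap.coe_coe, hNTap, aux_clm_eval (fderiv ℝ N p) x1 x2]
        apply Submodule.add_mem
        · exact Submodule.smul_mem _ _ (Submodule.subset_span ⟨0, rfl⟩)
        · exact Submodule.smul_mem _ _ (Submodule.subset_span ⟨1, rfl⟩)
      · rw [Submodule.span_le]
        rintro y ⟨k, rfl⟩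
        fin_cases k
        · exact ⟨(((1 : ℝ), (0 : ℝ)), 0), by rw [ContinuousLinearMap.coe_coe, hNTap]; rfl⟩
        · exact ⟨(((0 : ℝ), (1 : ℝ)), 0), by rw [ContinuousLinearMap.coe_coe, hNTap]; rfl⟩
    rw [hrange, finrank_span_eq_card hNuNv]
    rfl
  · -- the eigenvalue structure
    set μ : ℝ := Real.sqrt (α ^ 2 + β * γ) with hμ
    have hμpos : 0 < μ := Real.sqrt_pos.mpr hαβγ
    have hμsq : μ ^ 2 = α ^ 2 + β * γ := Real.sq_sqrt hαβγ.le
    obtain ⟨a₁, c₁, hne₁, h₁₁, h₁₂⟩ := eig (-μ) (by rw [← hμsq]; ring)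
    obtain ⟨a₂, c₂, hne₂, h₂₁, h₂₂⟩ := eig μ hμsq
    obtain ⟨ch₁, hch₁⟩ := hmkey a₁ c₁
    obtain ⟨ch₂, hch₂⟩ := hmkey a₂ c₂
    refine ⟨μ / (1 + (∑ i, w i * ⟪b i p, z p⟫) / r ^ 2),
      div_ne_zero hμpos.ne' hKne, ((a₁, c₁), ch₁), ((a₂, c₂), ch₂), ?_, ?_, ?_, ?_⟩
    · rw [hch₁]
      exact smul_ne_zero hKne (hpair a₁ c₁ hne₁)
    · rw [hch₂]
      exact smul_ne_zero hKne (hpair a₂ c₂ hne₂)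
    · rw [hch₁, hNTap, hDNac a₁ c₁ (-μ) h₁₁ h₁₂, smul_smul]
      congr 1
      rw [neg_mul, div_mul_cancel₀ μ hKne]
    · rw [hch₂, hNTap, hDNac a₂ c₂ μ h₂₁ h₂₂, smul_smul]
      congr 1
      exact (div_mul_cancel₀ μ hKne).symm
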